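/- For every n ∈ ℕ, the probability of stopping by time n under p = α satisfies P_α(τ ≤ n) ≤ 2ε_n. -/

import Mathlib

open MeasureTheory ProbabilityTheory Filter Asymptotics
open scoped ENNReal

namespace SeqMC

variable {Ω : Type*} [MeasurableSpace Ω]

/-- Partial sums: `S n = X_1 + ⋯ + X_n`, where the i-th variable `X_i` is `X (i-1)`. -/
def S (X : ℕ → Ω → ℕ) (n : ℕ) (ω : Ω) : ℕ := ∑ i ∈ Finset.range n, X i ω

/-- `X` is an i.i.d. Bernoulli(p) sequence under the probability measure `P`. -/
structure IsBernoulliSeq (P : Measure Ω) (p : ℝ) (X : ℕ → Ω → ℕ) : Prop where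
  isProb : IsProbabilityMeasure P
  meas : ∀ i, Measurable (X i)
  bdd : ∀ i ω, X i ω ≤ 1
  indep : iIndepFun X P
  bern : ∀ i, P (X i ⁻¹' {1}) = ENNReal.ofReal p

/-- The walk stayed strictly between the boundaries at all steps `1 ≤ k ≤ n`, i.e. `τ > n`. -/
def notStopped (X : ℕ → Ω → ℕ) (U L : ℕ → ℤ) (n : ℕ) (ω : Ω) : Prop :=
  ∀ k, 1 ≤ k → k ≤ n → L k < (S X k ω : ℤ) ∧ (S X k ω : ℤ) < U k

/-- The event `τ ≤ n` and `S_τ ≥ U_τ`. -/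
def hitUpperBy (X : ℕ → Ω → ℕ) (U L : ℕ → ℤ) (n : ℕ) (ω : Ω) : Prop :=
  ∃ k, 1 ≤ k ∧ k ≤ n ∧ notStopped X U L (k - 1) ω ∧ U k ≤ (S X k ω : ℤ)

/-- The event `τ ≤ n` and `S_τ ≤ L_τ`. -/
def hitLowerBy (X : ℕ → Ω → ℕ) (U L : ℕ → ℤ) (n : ℕ) (ω : Ω) : Prop :=
  ∃ k, 1 ≤ k ∧ k ≤ n ∧ notStopped X U L (k - 1) ω ∧ (S X k ω : ℤ) ≤ L k

/-- The recursively defined boundaries `(U_n, L_n)`: `U_1 = 2`, `L_1 = -1` and for `n ≥ 2`,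
`U_n` is the least `j ∈ {1,2,…}` with `P_α(τ ≥ n, S_n ≥ j) + P_α(τ < n, S_τ ≥ U_τ) ≤ ε_n`,
`L_n` is the greatest `j ∈ ℤ` with `P_α(τ ≥ n, S_n ≤ j) + P_α(τ < n, S_τ ≤ L_τ) ≤ ε_n`.
Here `Pα` is the measure `P_α` and `εs` the spending sequence. -/
noncomputable def bnd (Pα : Measure Ω) (X : ℕ → Ω → ℕ) (εs : ℕ → ℝ) : ℕ → ℤ × ℤ
  | 0 => (2, -1)
  | 1 => (2, -1)
  | n + 2 =>
      let U : ℕ → ℤ := fun k => if h : k < n + 2 then (bnd Pα X εs k).1 else 0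
      let L : ℕ → ℤ := fun k => if h : k < n + 2 then (bnd Pα X εs k).2 else 0
      (sInf {j : ℤ | 1 ≤ j ∧
          Pα {ω | notStopped X U L (n + 1) ω ∧ j ≤ (S X (n + 2) ω : ℤ)} +
            Pα {ω | hitUpperBy X U L (n + 1) ω} ≤ ENNReal.ofReal (εs (n + 2))},
       sSup {j : ℤ |
          Pα {ω | notStopped X U L (n + 1) ω ∧ (S X (n + 2) ω : ℤ) ≤ j} +
            Pα {ω | hitLowerBy X U L (n + 1) ω} ≤ ENNReal.ofReal (εs (n + 2))})
  termination_by n => n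
  decreasing_by all_goals omega

/-- The upper boundary `U_n`. -/
noncomputable def Ub (Pα : Measure Ω) (X : ℕ → Ω → ℕ) (εs : ℕ → ℝ) (n : ℕ) : ℤ :=
  (bnd Pα X εs n).1

/-- The lower boundary `L_n`. -/
noncomputable def Lb (Pα : Measure Ω) (X : ℕ → Ω → ℕ) (εs : ℕ → ℝ) (n : ℕ) : ℤ :=
  (bnd Pα X εs n).2

/-- The stopping time `τ = inf {k ≥ 1 : S_k ≥ U_k or S_k ≤ L_k}`, with `0` encoding `τ = ∞`. -/
noncomputable def tau (Pα : Measure Ω) (X : ℕ → Ω → ℕ) (εs : ℕ → ℝ) (ω : Ω) : ℕ :=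
  sInf {k | 1 ≤ k ∧ ((S X k ω : ℤ) ≤ Lb Pα X εs k ∨ Ub Pα X εs k ≤ (S X k ω : ℤ))}

/-- `τ` as an extended nonneg real (`∞` when the algorithm never stops). -/
noncomputable def tauE (Pα : Measure Ω) (X : ℕ → Ω → ℕ) (εs : ℕ → ℝ) (ω : Ω) : ℝ≥0∞ :=
  if tau Pα X εs ω = 0 then ⊤ else (tau Pα X εs ω : ℝ≥0∞)

/-- The event `τ < ∞` and `S_τ ≥ U_τ`. -/
def hitsUpper (Pα : Measure Ω) (X : ℕ → Ω → ℕ) (εs : ℕ → ℝ) (ω : Ω) : Prop :=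
  tau Pα X εs ω ≠ 0 ∧ Ub Pα X εs (tau Pα X εs ω) ≤ (S X (tau Pα X εs ω) ω : ℤ)

/-- The event `τ < ∞` and `S_τ ≤ L_τ`. -/
def hitsLower (Pα : Measure Ω) (X : ℕ → Ω → ℕ) (εs : ℕ → ℝ) (ω : Ω) : Prop :=
  tau Pα X εs ω ≠ 0 ∧ (S X (tau Pα X εs ω) ω : ℤ) ≤ Lb Pα X εs (tau Pα X εs ω)

/-- The estimator `p̂ = S_τ/τ` (`= α` if `τ = ∞`). -/
noncomputable def phat (Pα : Measure Ω) (X : ℕ → Ω → ℕ) (εs : ℕ → ℝ) (α : ℝ) (ω : Ω) : ℝ :=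
  if tau Pα X εs ω = 0 then α
  else (S X (tau Pα X εs ω) ω : ℝ) / (tau Pα X εs ω)

end SeqMC

/-!
`U_n` is by construction the least level at which the upper error spent up to time `n` is at most
`ε_n`, so `P_α(τ ≤ n, S_τ ≥ U_τ) ≤ ε_n` as soon as that infimum is attained. It is: the level
`n + 1` is admissible, since `S_n ≤ n` makes the new term vanish while the error spent before time
`n` is at most `ε_{n-1} ≤ ε_n` by induction. Symmetrically `P_α(τ ≤ n, S_τ ≤ L_τ) ≤ ε_n`, and a
union bound gives `P_α(τ ≤ n) ≤ 2 ε_n`.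
-/

theorem Int.sSup_mem_of_isLowerSet {s : Set ℤ} (hs : IsLowerSet s) (hne : s.Nonempty) :
    sSup s ∈ s := by
  by_cases hb : BddAbove s
  · exact Int.csSup_mem hne hb
  · obtain ⟨j, hj, hj0⟩ := not_bddAbove_iff.1 hb 0
    rw [Int.csSup_of_not_bddAbove hb]
    exact hs hj0.le hj

namespace SeqMC

variable {Ω : Type*}

section Events

variable {X : ℕ → Ω → ℕ} {U L U' L' : ℕ → ℤ} {n : ℕ} {ω : Ω}

lemma S_le (hX : ∀ i ω, X i ω ≤ 1) (n : ℕ) (ω : Ω) : S X n ω ≤ n := by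
  simpa [S] using Finset.sum_le_sum fun i (_ : i ∈ Finset.range n) => hX i ω

lemma notStopped_congr (hU : ∀ k ≤ n, U k = U' k) (hL : ∀ k ≤ n, L k = L' k) :
    notStopped X U L n ω ↔ notStopped X U' L' n ω :=
  forall₃_congr fun k _ hk => by rw [hU k hk, hL k hk]

lemma hitUpperBy_congr (hU : ∀ k ≤ n, U k = U' k) (hL : ∀ k ≤ n, L k = L' k) :
    hitUpperBy X U L n ω ↔ hitUpperBy X U' L' n ω :=
  exists_congr fun k => and_congr_right fun _ => and_congr_right fun hk => by
    rw [notStopped_congr (fun j _ => hU j (by omega)) (fun j _ => hL j (by omega)), hU k hk]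

lemma hitLowerBy_congr (hU : ∀ k ≤ n, U k = U' k) (hL : ∀ k ≤ n, L k = L' k) :
    hitLowerBy X U L n ω ↔ hitLowerBy X U' L' n ω :=
  exists_congr fun k => and_congr_right fun _ => and_congr_right fun hk => by
    rw [notStopped_congr (fun j _ => hU j (by omega)) (fun j _ => hL j (by omega)), hL k hk]

lemma hitUpperBy_succ :
    hitUpperBy X U L (n + 1) ω ↔
      hitUpperBy X U L n ω ∨ notStopped X U L n ω ∧ U (n + 1) ≤ S X (n + 1) ω := by
  constructor
  · rintro ⟨k, hk1, hkn, hns, hk⟩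
    obtain hkn | rfl : k ≤ n ∨ k = n + 1 := by omega
    · exact .inl ⟨k, hk1, hkn, hns, hk⟩
    · exact .inr ⟨hns, hk⟩
  · rintro (⟨k, hk1, hkn, hns, hk⟩ | ⟨hns, hn⟩)
    · exact ⟨k, hk1, by omega, hns, hk⟩
    · exact ⟨n + 1, by omega, le_rfl, hns, hn⟩

lemma hitLowerBy_succ :
    hitLowerBy X U L (n + 1) ω ↔
      hitLowerBy X U L n ω ∨ notStopped X U L n ω ∧ S X (n + 1) ω ≤ L (n + 1) := by
  constructor
  · rintro ⟨k, hk1, hkn, hns, hk⟩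
    obtain hkn | rfl : k ≤ n ∨ k = n + 1 := by omega
    · exact .inl ⟨k, hk1, hkn, hns, hk⟩
    · exact .inr ⟨hns, hk⟩
  · rintro (⟨k, hk1, hkn, hns, hk⟩ | ⟨hns, hn⟩)
    · exact ⟨k, hk1, by omega, hns, hk⟩
    · exact ⟨n + 1, by omega, le_rfl, hns, hn⟩

end Events

section Boundaries

variable [MeasurableSpace Ω] (Pα : Measure Ω) (X : ℕ → Ω → ℕ) (εs : ℕ → ℝ)

def upperAdmissible (n : ℕ) : Set ℤ :=
  {j | 1 ≤ j ∧ Pα {ω | notStopped X (Ub Pα X εs) (Lb Pα X εs) n ω ∧ j ≤ S X (n + 1) ω} +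
    Pα {ω | hitUpperBy X (Ub Pα X εs) (Lb Pα X εs) n ω} ≤ ENNReal.ofReal (εs (n + 1))}

def lowerAdmissible (n : ℕ) : Set ℤ :=
  {j | Pα {ω | notStopped X (Ub Pα X εs) (Lb Pα X εs) n ω ∧ S X (n + 1) ω ≤ j} +
    Pα {ω | hitLowerBy X (Ub Pα X εs) (Lb Pα X εs) n ω} ≤ ENNReal.ofReal (εs (n + 1))}

variable {Pα X εs}

lemma Ub_one : Ub Pα X εs 1 = 2 := by
  rw [Ub, bnd]

lemma Lb_one : Lb Pα X εs 1 = -1 := by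
  rw [Lb, bnd]

lemma bnd_add_two (n : ℕ) :
    bnd Pα X εs (n + 2) =
      (sInf (upperAdmissible Pα X εs (n + 1)), sSup (lowerAdmissible Pα X εs (n + 1))) := by
  rw [bnd]
  have hU : ∀ k ≤ n + 1,
      (fun k => if _ : k < n + 2 then (bnd Pα X εs k).1 else 0) k = Ub Pα X εs k :=
    fun k hk => dif_pos (by omega)
  have hL : ∀ k ≤ n + 1,
      (fun k => if _ : k < n + 2 then (bnd Pα X εs k).2 else 0) k = Lb Pα X εs k :=
    fun k hk => dif_pos (by omega)
  simp only [notStopped_congr hU hL, hitUpperBy_congr hU hL, hitLowerBy_congr hU hL]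
  rfl

lemma Ub_mem_upperAdmissible (hX : ∀ i ω, X i ω ≤ 1) {n : ℕ}
    (hprev : Pα {ω | hitUpperBy X (Ub Pα X εs) (Lb Pα X εs) (n + 1) ω} ≤
      ENNReal.ofReal (εs (n + 2))) :
    Ub Pα X εs (n + 2) ∈ upperAdmissible Pα X εs (n + 1) := by
  rw [Ub, bnd_add_two]
  refine Int.csInf_mem ⟨n + 3, by omega, ?_⟩ ⟨1, fun j hj => hj.1⟩
  have hS : ∀ ω, ¬(n : ℤ) + 3 ≤ S X (n + 1 + 1) ω := fun ω => by
    have := S_le hX (n + 1 + 1) ω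
    omega
  simpa only [hS, and_false, Set.ofPred_false, measure_empty, zero_add]

lemma Lb_mem_lowerAdmissible {n : ℕ}
    (hprev : Pα {ω | hitLowerBy X (Ub Pα X εs) (Lb Pα X εs) (n + 1) ω} ≤
      ENNReal.ofReal (εs (n + 2))) :
    Lb Pα X εs (n + 2) ∈ lowerAdmissible Pα X εs (n + 1) := by
  rw [Lb, bnd_add_two]
  refine Int.sSup_mem_of_isLowerSet (fun j j' hj h => ?_) ⟨-1, ?_⟩
  · refine (add_le_add (measure_mono fun ω hω => ?_) le_rfl).trans h
    exact ⟨hω.1, hω.2.trans hj⟩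
  · have hS : ∀ ω, ¬(S X (n + 1 + 1) ω : ℤ) ≤ -1 := fun ω => by omega
    simpa only [lowerAdmissible, Set.mem_ofPred_eq, hS, and_false, Set.ofPred_false, measure_empty,
      zero_add]

theorem measure_hitUpperBy_le (hX : ∀ i ω, X i ω ≤ 1) (hmono : Monotone εs) :
    ∀ n, Pα {ω | hitUpperBy X (Ub Pα X εs) (Lb Pα X εs) n ω} ≤ ENNReal.ofReal (εs n)
  | 0 => by
    have h : ∀ ω, ¬hitUpperBy X (Ub Pα X εs) (Lb Pα X εs) 0 ω := fun ω ⟨k, hk1, hk0, _⟩ => by omega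
    simp [h]
  | 1 => by
    have h : ∀ ω, ¬hitUpperBy X (Ub Pα X εs) (Lb Pα X εs) 1 ω := fun ω ⟨k, hk1, hk, _, hU⟩ => by
      obtain rfl : k = 1 := by omega
      have := S_le hX 1 ω
      rw [Ub_one] at hU
      omega
    simp [h]
  | n + 2 => by
    have hprev := (measure_hitUpperBy_le hX hmono (n + 1)).trans
      (ENNReal.ofReal_le_ofReal (hmono (Nat.le_succ _)))
    calc Pα {ω | hitUpperBy X (Ub Pα X εs) (Lb Pα X εs) (n + 2) ω}
        ≤ Pα ({ω | notStopped X (Ub Pα X εs) (Lb Pα X εs) (n + 1) ω ∧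
              Ub Pα X εs (n + 2) ≤ S X (n + 2) ω} ∪
            {ω | hitUpperBy X (Ub Pα X εs) (Lb Pα X εs) (n + 1) ω}) :=
          measure_mono fun ω h => (hitUpperBy_succ.1 h).symm
      _ ≤ _ := measure_union_le _ _
      _ ≤ _ := (Ub_mem_upperAdmissible hX hprev).2

theorem measure_hitLowerBy_le (hmono : Monotone εs) :
    ∀ n, Pα {ω | hitLowerBy X (Ub Pα X εs) (Lb Pα X εs) n ω} ≤ ENNReal.ofReal (εs n)
  | 0 => by
    have h : ∀ ω, ¬hitLowerBy X (Ub Pα X εs) (Lb Pα X εs) 0 ω := fun ω ⟨k, hk1, hk0, _⟩ => by omega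
    simp [h]
  | 1 => by
    have h : ∀ ω, ¬hitLowerBy X (Ub Pα X εs) (Lb Pα X εs) 1 ω := fun ω ⟨k, hk1, hk, _, hL⟩ => by
      obtain rfl : k = 1 := by omega
      rw [Lb_one] at hL
      omega
    simp [h]
  | n + 2 => by
    have hprev := (measure_hitLowerBy_le hmono (n + 1)).trans
      (ENNReal.ofReal_le_ofReal (hmono (Nat.le_succ _)))
    calc Pα {ω | hitLowerBy X (Ub Pα X εs) (Lb Pα X εs) (n + 2) ω}
        ≤ Pα ({ω | notStopped X (Ub Pα X εs) (Lb Pα X εs) (n + 1) ω ∧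
              S X (n + 2) ω ≤ Lb Pα X εs (n + 2)} ∪
            {ω | hitLowerBy X (Ub Pα X εs) (Lb Pα X εs) (n + 1) ω}) :=
          measure_mono fun ω h => (hitLowerBy_succ.1 h).symm
      _ ≤ _ := measure_union_le _ _
      _ ≤ _ := Lb_mem_lowerAdmissible hprev

lemma hitUpperBy_or_hitLowerBy_of_tau_le {ω : Ω} {n : ℕ} (h1 : 1 ≤ tau Pα X εs ω)
    (hn : tau Pα X εs ω ≤ n) :
    hitUpperBy X (Ub Pα X εs) (Lb Pα X εs) n ω ∨ hitLowerBy X (Ub Pα X εs) (Lb Pα X εs) n ω := by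
  have hns : notStopped X (Ub Pα X εs) (Lb Pα X εs) (tau Pα X εs ω - 1) ω := fun k hk1 hk => by
    have := Nat.notMem_of_lt_sInf (show k < tau Pα X εs ω by omega)
    simp only [Set.mem_ofPred_eq, not_and, not_or, not_le] at this
    exact this hk1
  rcases (Nat.sInf_mem (Nat.nonempty_of_pos_sInf h1)).2 with h | h
  · exact .inr ⟨_, h1, hn, hns, h⟩
  · exact .inl ⟨_, h1, hn, hns, h⟩

end Boundaries

theorem statement_8_general {Ω : Type*} [MeasurableSpace Ω]
    (α : ℝ) (hα : α ∈ Set.Ioo (0:ℝ) 1)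
    (εs : ℕ → ℝ) (hmono : Monotone εs)
    (P : ℝ → Measure Ω) (X : ℕ → Ω → ℕ)
    (hBern : ∀ p ∈ Set.Icc (0:ℝ) 1, IsBernoulliSeq (P p) p X) :
    ∀ n : ℕ, 1 ≤ n →
      P α {ω | 1 ≤ tau (P α) X εs ω ∧ tau (P α) X εs ω ≤ n} ≤ 2 * ENNReal.ofReal (εs n) := by
  intro n _
  have hX := (hBern α (Set.Ioo_subset_Icc_self hα)).bdd
  calc P α {ω | 1 ≤ tau (P α) X εs ω ∧ tau (P α) X εs ω ≤ n}
      ≤ P α ({ω | hitUpperBy X (Ub (P α) X εs) (Lb (P α) X εs) n ω} ∪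
          {ω | hitLowerBy X (Ub (P α) X εs) (Lb (P α) X εs) n ω}) :=
        measure_mono fun ω h => hitUpperBy_or_hitLowerBy_of_tau_le h.1 h.2
    _ ≤ _ := measure_union_le _ _
    _ ≤ ENNReal.ofReal (εs n) + ENNReal.ofReal (εs n) :=
        add_le_add (measure_hitUpperBy_le hX hmono n) (measure_hitLowerBy_le hmono n)
    _ = 2 * ENNReal.ofReal (εs n) := (two_mul _).symm

theorem statement_8 {Ω : Type*} [MeasurableSpace Ω]
    (α ε : ℝ) (hα : α ∈ Set.Ioo (0:ℝ) 1) (hε : ε ∈ Set.Ioo (0:ℝ) 1)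
    (εs : ℕ → ℝ) (hεs0 : εs 0 = 0) (hmono : Monotone εs)
    (hnonneg : ∀ n, 0 ≤ εs n) (hlt : ∀ n, εs n < ε)
    (hlim : Filter.Tendsto εs Filter.atTop (nhds ε))
    (P : ℝ → Measure Ω) (X : ℕ → Ω → ℕ)
    (hBern : ∀ p ∈ Set.Icc (0:ℝ) 1, IsBernoulliSeq (P p) p X) :
    ∀ n : ℕ, 1 ≤ n →
      P α {ω | 1 ≤ tau (P α) X εs ω ∧ tau (P α) X εs ω ≤ n} ≤ 2 * ENNReal.ofReal (εs n) :=
  statement_8_general α hα εs hmono P X hBern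

end SeqMC
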